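/- arXiv:1210.3259 — 3 statements merged into one kernel-verified Lean document; each statement's English description precedes it below -/
import Mathlib

section
/- Let θ > 0, let σ² ≥ 0, and let b₂ ≥ b₃ ≥ 0 be real numbers (b₂ plays the role of β_{2;2;0}, b₃ of β_{3;3;0}, and by consistency β_{3;2;1} = b₂ − b₃ ≥ 0). Let α be a real number and define m₂ = (σ² + b₂ + θα)·α / (σ² + b₂ + θ) and m₃ = (b₃·α + (3/2)·(2σ² + 2(b₂ − b₃) + θα)·m₂) / (3σ² + 3(b₂ − b₃) + b₃ + (3/2)θ). Then m₂·(b₂ + σ² + θα/2) − m₃·(b₂ + σ² + θ/2) = 0 if and only if b₃·θ²·α·(2α − 1)·(α − 1) = 0. Consequently, if in addition α ∉ {0, 1/2, 1}, then m₂·(b₂ + σ² + θα/2) = m₃·(b₂ + σ² + θ/2) implies b₃ = 0. -/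
/-- Algebraic core of the reversibility theorem for the `(Ξ,A)`-Fleming-Viot process.
With `θ > 0`, `σ² ≥ 0`, `b₂ ≥ b₃ ≥ 0` (where `b₂ = β_{2;2;0}`, `b₃ = β_{3;3;0}` and by
consistency `β_{3;2;1} = b₂ − b₃`), and with the second and third moments
`m₂ = (σ² + b₂ + θα)·α/(σ² + b₂ + θ)` and
`m₃ = (b₃α + (3/2)(2σ² + 2(b₂−b₃) + θα)m₂)/(3σ² + 3(b₂−b₃) + b₃ + (3/2)θ)`,
the reversibility equation `m₂(b₂+σ²+θα/2) − m₃(b₂+σ²+θ/2) = 0` holds iff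
`b₃θ²α(2α−1)(α−1) = 0`; hence for `α ∉ {0, 1/2, 1}` it forces `b₃ = 0`. -/
theorem reversibility_forces_kingman
    (θ σ2 b₂ b₃ α m₂ m₃ : ℝ)
    (hθ : 0 < θ) (hσ : 0 ≤ σ2) (hb₃ : 0 ≤ b₃) (hb₂ : b₃ ≤ b₂)
    (hm₂ : m₂ = (σ2 + b₂ + θ * α) * α / (σ2 + b₂ + θ))
    (hm₃ : m₃ = (b₃ * α + (3 / 2) * (2 * σ2 + 2 * (b₂ - b₃) + θ * α) * m₂) /
      (3 * σ2 + 3 * (b₂ - b₃) + b₃ + (3 / 2) * θ)) :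
    (m₂ * (b₂ + σ2 + θ * α / 2) - m₃ * (b₂ + σ2 + θ / 2) = 0 ↔
      b₃ * θ ^ 2 * α * (2 * α - 1) * (α - 1) = 0) ∧
    (α ≠ 0 → α ≠ 1 / 2 → α ≠ 1 →
      m₂ * (b₂ + σ2 + θ * α / 2) = m₃ * (b₂ + σ2 + θ / 2) → b₃ = 0) := by
  have hD2 : (0:ℝ) < σ2 + b₂ + θ := by linarith
  have hD3 : (0:ℝ) < 3 * σ2 + 3 * (b₂ - b₃) + b₃ + (3 / 2) * θ := by linarith
  have e2 : m₂ * (σ2 + b₂ + θ) = (σ2 + b₂ + θ * α) * α := by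
    rw [hm₂, div_mul_cancel₀ _ hD2.ne']
  have e3 : m₃ * (3 * σ2 + 3 * (b₂ - b₃) + b₃ + (3 / 2) * θ) =
      b₃ * α + (3 / 2) * (2 * σ2 + 2 * (b₂ - b₃) + θ * α) * m₂ := by
    rw [hm₃, div_mul_cancel₀ _ hD3.ne']
  have key : m₂ * (b₂ + σ2 + θ * α / 2) - m₃ * (b₂ + σ2 + θ / 2) =
      -(1/2) * (b₃ * θ ^ 2 * α * (2 * α - 1) * (α - 1)) /
        ((σ2 + b₂ + θ) * (3 * σ2 + 3 * (b₂ - b₃) + b₃ + (3 / 2) * θ)) := by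
    rw [eq_div_iff (by positivity)]
    linear_combination ((b₂ + σ2 + θ * α / 2) * (3 * σ2 + 3 * (b₂ - b₃) + b₃ + (3 / 2) * θ)
        - (b₂ + σ2 + θ / 2) * (3 / 2) * (2 * σ2 + 2 * (b₂ - b₃) + θ * α)) * e2
      - (b₂ + σ2 + θ / 2) * (σ2 + b₂ + θ) * e3
  have hiff : m₂ * (b₂ + σ2 + θ * α / 2) - m₃ * (b₂ + σ2 + θ / 2) = 0 ↔
      b₃ * θ ^ 2 * α * (2 * α - 1) * (α - 1) = 0 := by
    rw [key, div_eq_zero_iff]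
    constructor
    · rintro (h | h)
      · linarith
      · exact absurd h (mul_pos hD2 hD3).ne'
    · intro h
      left; rw [h]; ring
  refine ⟨hiff, fun h0 h12 h1 heq => ?_⟩
  have h := hiff.mp (by linarith)
  have hθ' : θ ^ 2 ≠ 0 := by positivity
  have h2 : 2 * α - 1 ≠ 0 := fun hc => h12 (by linarith)
  have h3 : α - 1 ≠ 0 := sub_ne_zero.mpr h1
  have : b₃ * (θ ^ 2 * α * (2 * α - 1) * (α - 1)) = 0 := by linarith [h]
  rcases mul_eq_zero.mp this with hb | hz
  · exact hb
  · exact absurd hz (by simp [hθ', h0, h2, h3, mul_ne_zero])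
end

section
/- Let θ > 0 and let a₂, a₃, a₄, a₅, a_{211}, a_{2111} be real numbers. Define a_{41} = a₄ − a₅, a_{221} = (1/5)a₂ − (4/5)a₃ + a₄ + (1/5)a_{211} − (2/5)a_{2111} − (2/5)a₅, a_{311} = (3/5)a_{211} − (2/5)a₂ + (8/5)a₃ − 2a₄ − (1/5)a_{2111} + (4/5)a₅, a_{32} = −(3/5)a₃ + (1/5)a_{2111} + (1/5)a₅ − (3/5)a_{211} + (2/5)a₂. Then: (i) 10a_{2111} + 15a_{221} + 10a_{311} + 10a_{32} + 5a_{41} + a₅ = 4a_{2111} + 3a₂ − 2a₃ + 3a_{211}; and (ii) with m₁ = 1/2, m₂ = (2a₂ + θ)/(4(a₂ + θ)), m₃ = (4a₂ + θ)/(8(a₂ + θ)), m₄ = (θ² − 4a₃θ + 10a₂θ + 2a₄θ + 12a_{211}a₂ + 12a₂² − 8a₃a₂)/(8(3a_{211} + 3a₂ − 2a₃ + 2θ)(a₂ + θ)), and provided a₂ + θ > 0, 3a_{211} + 3a₂ − 2a₃ + 2θ > 0 and 4a_{2111} + 3a₂ − 2a₃ + 3a_{211} + (5/2)θ > 0, one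 has (a₅·m₁ + (10a_{32} + 5a_{41})·m₂ + (15a_{221} + 10a_{311})·m₃ + (10a_{2111} + (5/4)θ)·m₄) / (10a_{2111} + 15a_{221} + 10a_{311} + 10a_{32} + 5a_{41} + a₅ + (5/2)θ) = ((θ − 6a_{211} + 10a₄ + 20a₂ − 16a₃)·θ − 16a₃a₂ + 24a₂² + 24a_{211}a₂) / (16·(a₂ + θ)·(3a_{211} + 3a₂ − 2a₃ + 2θ)). -/
/-!
Once the consistency relations eliminate `a₄₁, a₂₂₁, a₃₁₁, a₃₂`, the total jump rate
`10 a₂₁₁₁ + 15 a₂₂₁ + 10 a₃₁₁ + 10 a₃₂ + 5 a₄₁ + a₅` collapses to `4 a₂₁₁₁ + 3 a₂ - 2 a₃ + 3 a₂₁₁`,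
and the weighted sum of the lower moments turns out to be divisible by the denominator
`4 a₂₁₁₁ + 3 a₂ - 2 a₃ + 3 a₂₁₁ + (5/2) θ` of the recursion, which then cancels.
-/

section FifthMoment

variable {θ a₂ a₃ a₄ a₅ a211 a2111 a41 a221 a311 a32 : ℝ}

theorem total_rate_eq_of_consistency
    (ha41 : a41 = a₄ - a₅)
    (ha221 : a221 = (1/5) * a₂ - (4/5) * a₃ + a₄ + (1/5) * a211 - (2/5) * a2111 - (2/5) * a₅)
    (ha311 : a311 = (3/5) * a211 - (2/5) * a₂ + (8/5) * a₃ - 2 * a₄ - (1/5) * a2111 + (4/5) * a₅)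
    (ha32 : a32 = -(3/5) * a₃ + (1/5) * a2111 + (1/5) * a₅ - (3/5) * a211 + (2/5) * a₂) :
    10 * a2111 + 15 * a221 + 10 * a311 + 10 * a32 + 5 * a41 + a₅ =
      4 * a2111 + 3 * a₂ - 2 * a₃ + 3 * a211 := by
  subst ha41 ha221 ha311 ha32
  ring

theorem weighted_lower_moments_eq
    (ha41 : a41 = a₄ - a₅)
    (ha221 : a221 = (1/5) * a₂ - (4/5) * a₃ + a₄ + (1/5) * a211 - (2/5) * a2111 - (2/5) * a₅)
    (ha311 : a311 = (3/5) * a211 - (2/5) * a₂ + (8/5) * a₃ - 2 * a₄ - (1/5) * a2111 + (4/5) * a₅)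
    (ha32 : a32 = -(3/5) * a₃ + (1/5) * a2111 + (1/5) * a₅ - (3/5) * a211 + (2/5) * a₂)
    (h₁ : a₂ + θ ≠ 0) (h₂ : 3 * a211 + 3 * a₂ - 2 * a₃ + 2 * θ ≠ 0) :
    a₅ * (1 / 2) + (10 * a32 + 5 * a41) * ((2 * a₂ + θ) / (4 * (a₂ + θ))) +
        (15 * a221 + 10 * a311) * ((4 * a₂ + θ) / (8 * (a₂ + θ))) +
        (10 * a2111 + (5/4) * θ) *
          ((θ ^ 2 - 4 * a₃ * θ + 10 * a₂ * θ + 2 * a₄ * θ + 12 * a211 * a₂ +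
              12 * a₂ ^ 2 - 8 * a₃ * a₂) /
            (8 * (3 * a211 + 3 * a₂ - 2 * a₃ + 2 * θ) * (a₂ + θ))) =
      ((θ - 6 * a211 + 10 * a₄ + 20 * a₂ - 16 * a₃) * θ - 16 * a₃ * a₂ + 24 * a₂ ^ 2 +
          24 * a211 * a₂) * (4 * a2111 + 3 * a₂ - 2 * a₃ + 3 * a211 + (5/2) * θ) /
        (16 * (a₂ + θ) * (3 * a211 + 3 * a₂ - 2 * a₃ + 2 * θ)) := by
  subst ha41 ha221 ha311 ha32
  -- `field_simp` clears this denominator only once it is an atom.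
  set D := 3 * a211 + 3 * a₂ - 2 * a₃ + 2 * θ with hD
  field_simp
  rw [hD]
  ring

end FifthMoment

theorem fifth_moment_formula_general
    (θ a₂ a₃ a₄ a₅ a211 a2111 a41 a221 a311 a32 m₁ m₂ m₃ m₄ : ℝ)
    (ha41 : a41 = a₄ - a₅)
    (ha221 : a221 = (1/5) * a₂ - (4/5) * a₃ + a₄ + (1/5) * a211 - (2/5) * a2111 - (2/5) * a₅)
    (ha311 : a311 = (3/5) * a211 - (2/5) * a₂ + (8/5) * a₃ - 2 * a₄ - (1/5) * a2111 + (4/5) * a₅)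
    (ha32 : a32 = -(3/5) * a₃ + (1/5) * a2111 + (1/5) * a₅ - (3/5) * a211 + (2/5) * a₂)
    (hm₁ : m₁ = 1 / 2)
    (hm₂ : m₂ = (2 * a₂ + θ) / (4 * (a₂ + θ)))
    (hm₃ : m₃ = (4 * a₂ + θ) / (8 * (a₂ + θ)))
    (hm₄ : m₄ = (θ ^ 2 - 4 * a₃ * θ + 10 * a₂ * θ + 2 * a₄ * θ + 12 * a211 * a₂ +
        12 * a₂ ^ 2 - 8 * a₃ * a₂) /
      (8 * (3 * a211 + 3 * a₂ - 2 * a₃ + 2 * θ) * (a₂ + θ))) :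
    10 * a2111 + 15 * a221 + 10 * a311 + 10 * a32 + 5 * a41 + a₅ =
      4 * a2111 + 3 * a₂ - 2 * a₃ + 3 * a211 ∧
    (0 < a₂ + θ → 0 < 3 * a211 + 3 * a₂ - 2 * a₃ + 2 * θ →
      0 < 4 * a2111 + 3 * a₂ - 2 * a₃ + 3 * a211 + (5/2) * θ →
      (a₅ * m₁ + (10 * a32 + 5 * a41) * m₂ + (15 * a221 + 10 * a311) * m₃ +
          (10 * a2111 + (5/4) * θ) * m₄) /
        (10 * a2111 + 15 * a221 + 10 * a311 + 10 * a32 + 5 * a41 + a₅ + (5/2) * θ) =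
      ((θ - 6 * a211 + 10 * a₄ + 20 * a₂ - 16 * a₃) * θ - 16 * a₃ * a₂ + 24 * a₂ ^ 2 +
          24 * a211 * a₂) /
        (16 * (a₂ + θ) * (3 * a211 + 3 * a₂ - 2 * a₃ + 2 * θ))) := by
  have htotal := total_rate_eq_of_consistency ha41 ha221 ha311 ha32
  refine ⟨htotal, fun h₁ h₂ h₃ => ?_⟩
  rw [htotal, hm₁, hm₂, hm₃, hm₄,
    weighted_lower_moments_eq ha41 ha221 ha311 ha32 h₁.ne' h₂.ne',
    mul_div_right_comm, mul_div_cancel_right₀ _ h₃.ne']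

/-- Fifth moment of the invariant measure of a `(Ξ,A)`-Fleming-Viot process on a two-point
type space with symmetric parent-independent mutation (`α = 1/2`, so `(5/2)θα = (5/4)θ`).
Here `a₂ = β_{2;2;0}+σ²`, `a₃ = β_{3;3;0}`, `a₄ = β_{4;4;0}`, `a₅ = β_{5;5;0}`,
`a_{211} = β_{4;2;2}+σ²`, `a_{2111} = β_{5;2;3}+σ²`, `a_{41} = β_{5;4;1}`,
`a_{221} = β_{5;2,2;1}`, `a_{311} = β_{5;3;2}`, `a_{32} = β_{5;3,2;0}`, and the displayed
linear relations are the consistency conditions for the coalescence rates. -/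
theorem fifth_moment_formula
    (θ a₂ a₃ a₄ a₅ a211 a2111 a41 a221 a311 a32 m₁ m₂ m₃ m₄ : ℝ)
    (hθ : 0 < θ)
    (ha41 : a41 = a₄ - a₅)
    (ha221 : a221 = (1/5) * a₂ - (4/5) * a₃ + a₄ + (1/5) * a211 - (2/5) * a2111 - (2/5) * a₅)
    (ha311 : a311 = (3/5) * a211 - (2/5) * a₂ + (8/5) * a₃ - 2 * a₄ - (1/5) * a2111 + (4/5) * a₅)
    (ha32 : a32 = -(3/5) * a₃ + (1/5) * a2111 + (1/5) * a₅ - (3/5) * a211 + (2/5) * a₂)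
    (hm₁ : m₁ = 1 / 2)
    (hm₂ : m₂ = (2 * a₂ + θ) / (4 * (a₂ + θ)))
    (hm₃ : m₃ = (4 * a₂ + θ) / (8 * (a₂ + θ)))
    (hm₄ : m₄ = (θ ^ 2 - 4 * a₃ * θ + 10 * a₂ * θ + 2 * a₄ * θ + 12 * a211 * a₂ +
        12 * a₂ ^ 2 - 8 * a₃ * a₂) /
      (8 * (3 * a211 + 3 * a₂ - 2 * a₃ + 2 * θ) * (a₂ + θ))) :
    10 * a2111 + 15 * a221 + 10 * a311 + 10 * a32 + 5 * a41 + a₅ =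
      4 * a2111 + 3 * a₂ - 2 * a₃ + 3 * a211 ∧
    (0 < a₂ + θ → 0 < 3 * a211 + 3 * a₂ - 2 * a₃ + 2 * θ →
      0 < 4 * a2111 + 3 * a₂ - 2 * a₃ + 3 * a211 + (5/2) * θ →
      (a₅ * m₁ + (10 * a32 + 5 * a41) * m₂ + (15 * a221 + 10 * a311) * m₃ +
          (10 * a2111 + (5/4) * θ) * m₄) /
        (10 * a2111 + 15 * a221 + 10 * a311 + 10 * a32 + 5 * a41 + a₅ + (5/2) * θ) =
      ((θ - 6 * a211 + 10 * a₄ + 20 * a₂ - 16 * a₃) * θ - 16 * a₃ * a₂ + 24 * a₂ ^ 2 +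
          24 * a211 * a₂) /
        (16 * (a₂ + θ) * (3 * a211 + 3 * a₂ - 2 * a₃ + 2 * θ))) :=
  fifth_moment_formula_general θ a₂ a₃ a₄ a₅ a211 a2111 a41 a221 a311 a32 m₁ m₂ m₃ m₄ ha41 ha221
    ha311 ha32 hm₁ hm₂ hm₃ hm₄
end

section
/- Let p_s(z) = (2πs)^{−1/2} exp(−z²/(2s)) for s > 0 and z ∈ ℝ. For every T > 0 and every α ∈ (0, 1/4) there exists a constant C(T, α) > 0 such that for all t ∈ (0, T] and all δ, δ′ ∈ (0, 1]: ∫_ℝ e^{−2|x|} ( ∫_ℝ (p_{t+δ}(x − y) − p_{t+δ′}(x − y))² e^{|y|} dy ) dx ≤ C(T, α) · |δ − δ′|^α · t^{−2α − 1/2}. -/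
open Real MeasureTheory ProbabilityTheory

/-!
Write `D = p_{t+δ} - p_{t+δ'}`. Since `∂ₛ p_s(z) = p_s(z) (z²/(2s²) - 1/(2s))`, the mean value
theorem gives `|D(z)| ≲ t^{-5/2} |δ - δ'| (1 + z²)`, while `|D| ≤ p_{t+δ} + p_{t+δ'} ≤ 2 t^{-1/2}`.
Interpolating, `D² = |D|^α |D|^{1-α} |D| ≲ |δ - δ'|^α t^{-2α-1/2} (1 + z²) (p_{t+δ} + p_{t+δ'})`.
The weighted moments `∫ p_s(z) (1 + z²) e^{|z|} dz` stay bounded for `s ≤ T + 1`, because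
`(1 + z²) e^{|z|} ≲ e^{z²/(4s)}` and `p_s(z) e^{z²/(4s)} = √2 p_{2s}(z)`. Finally
`e^{|y|} ≤ e^{|x|} e^{|x-y|}` reduces the double integral to `∫ e^{-|x|} dx = 2` times such moments.
-/

/-- The one-dimensional heat kernel `p_s(z) = (2πs)^{−1/2} exp(−z²/(2s))`. -/
noncomputable def heatKernel (s z : ℝ) : ℝ :=
  (Real.sqrt (2 * Real.pi * s))⁻¹ * Real.exp (-(z ^ 2) / (2 * s))

lemma heatKernel_eq_gaussianPDFReal {s : ℝ} (hs : 0 ≤ s) :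
    heatKernel s = gaussianPDFReal 0 ⟨s, hs⟩ := by
  ext z
  simp [heatKernel, gaussianPDFReal]
  rfl

lemma heatKernel_pos {s : ℝ} (hs : 0 < s) (z : ℝ) : 0 < heatKernel s z := by
  rw [heatKernel_eq_gaussianPDFReal hs.le]
  exact gaussianPDFReal_pos _ _ _ (NNReal.coe_ne_zero.1 hs.ne')

lemma integrable_heatKernel {s : ℝ} (hs : 0 ≤ s) : Integrable (heatKernel s) := by
  rw [heatKernel_eq_gaussianPDFReal hs]
  exact integrable_gaussianPDFReal _ _

lemma integral_heatKernel {s : ℝ} (hs : 0 < s) : ∫ z, heatKernel s z = 1 := by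
  rw [heatKernel_eq_gaussianPDFReal hs.le]
  exact integral_gaussianPDFReal_eq_one _ (NNReal.coe_ne_zero.1 hs.ne')

lemma heatKernel_le_inv_sqrt {s : ℝ} (hs : 0 < s) (z : ℝ) : heatKernel s z ≤ (√s)⁻¹ := by
  have hexp : rexp (-(z ^ 2) / (2 * s)) ≤ 1 := exp_le_one_iff.2
    (div_nonpos_of_nonpos_of_nonneg (neg_nonpos.2 (sq_nonneg z)) (by positivity))
  have hsqrt : √s ≤ √(2 * π * s) := sqrt_le_sqrt (by nlinarith [pi_gt_three])
  calc heatKernel s z ≤ (√(2 * π * s))⁻¹ * 1 := by unfold heatKernel; gcongr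
    _ ≤ (√s)⁻¹ := by rw [mul_one]; gcongr

lemma hasDerivAt_heatKernel (z : ℝ) {s : ℝ} (hs : 0 < s) :
    HasDerivAt (fun s ↦ heatKernel s z)
      (heatKernel s z * (z ^ 2 / (2 * s ^ 2) - 1 / (2 * s))) s := by
  have h2πs : 0 < 2 * π * s := by positivity
  have hsqrt := ((hasDerivAt_id s).const_mul (2 * π)).sqrt h2πs.ne'
  have hexp := (((hasDerivAt_id s).const_mul 2).fun_inv (by positivity)).const_mul (-(z ^ 2)) |>.exp
  unfold heatKernel
  simp_rw [div_eq_mul_inv]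
  refine ((hsqrt.fun_inv (by positivity)).mul hexp).congr_deriv ?_
  simp only [id, mul_one]
  rw [sq_sqrt h2πs.le]
  field_simp
  ring

lemma abs_heatKernel_sub_le {t s₁ s₂ : ℝ} (ht : 0 < t) (h₁ : t ≤ s₁) (h₂ : t ≤ s₂) (z : ℝ) :
    |heatKernel s₁ z - heatKernel s₂ z| ≤ (z ^ 2 + t) / (2 * t ^ 2 * √t) * |s₁ - s₂| := by
  have hderiv_le : ∀ u ∈ Set.Ici t,
      ‖heatKernel u z * (z ^ 2 / (2 * u ^ 2) - 1 / (2 * u))‖ ≤ (z ^ 2 + t) / (2 * t ^ 2 * √t) := by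
    intro u (hu : t ≤ u)
    have hu₀ : 0 < u := ht.trans_le hu
    calc ‖heatKernel u z * (z ^ 2 / (2 * u ^ 2) - 1 / (2 * u))‖
        ≤ (√u)⁻¹ * (z ^ 2 / (2 * u ^ 2) + 1 / (2 * u)) := by
          rw [norm_mul, Real.norm_of_nonneg (heatKernel_pos hu₀ z).le]
          gcongr
          · exact heatKernel_le_inv_sqrt hu₀ z
          · exact (norm_sub_le _ _).trans (by simp [abs_of_pos hu₀])
      _ ≤ (√t)⁻¹ * (z ^ 2 / (2 * t ^ 2) + 1 / (2 * t)) := by gcongr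
      _ = (z ^ 2 + t) / (2 * t ^ 2 * √t) := by field_simp
  simpa [Real.norm_eq_abs] using Convex.norm_image_sub_le_of_norm_hasDerivWithin_le
    (fun u hu ↦ (hasDerivAt_heatKernel z (ht.trans_le hu)).hasDerivWithinAt) hderiv_le
    (convex_Ici t) h₂ h₁

lemma sq_le_rpow_mul_rpow_mul {d a m q α : ℝ} (hα₀ : 0 ≤ α) (hα₁ : α ≤ 1)
    (ha : |d| ≤ a) (hm : |d| ≤ m) (hq : |d| ≤ q) : d ^ 2 ≤ a ^ α * m ^ (1 - α) * q := by
  have hd := abs_nonneg d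
  calc d ^ 2 = |d| ^ α * |d| ^ (1 - α) * |d| := by
        rw [← rpow_add' hd (by norm_num), add_sub_cancel, rpow_one, ← sq, sq_abs]
    _ ≤ a ^ α * m ^ (1 - α) * q := by
        have ha₀ := hd.trans ha
        have hm₀ := hd.trans hm
        gcongr

lemma heatKernel_sub_sq_le {T t s₁ s₂ α : ℝ} (hα₀ : 0 ≤ α) (hα₁ : α ≤ 1) (ht : 0 < t)
    (htT : t ≤ T) (h₁ : t ≤ s₁) (h₂ : t ≤ s₂) (z : ℝ) :
    (heatKernel s₁ z - heatKernel s₂ z) ^ 2 ≤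
      ((1 + T) / 2) ^ α * 2 ^ (1 - α) * |s₁ - s₂| ^ α * t ^ (-2 * α - 1 / 2) *
        ((1 + z ^ 2) * (heatKernel s₁ z + heatKernel s₂ z)) := by
  have hT : 0 < T := ht.trans_le htT
  have hp₁ := heatKernel_pos (ht.trans_le h₁) z
  have hp₂ := heatKernel_pos (ht.trans_le h₂) z
  have hsqrt : (√t)⁻¹ = t ^ (-1 / 2 : ℝ) := by
    rw [sqrt_eq_rpow, ← rpow_neg ht.le]; norm_num
  have hLip : |heatKernel s₁ z - heatKernel s₂ z|
      ≤ (1 + T) / 2 * |s₁ - s₂| * t ^ (-5 / 2 : ℝ) * (1 + z ^ 2) := by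
    have ht52 : t ^ (-5 / 2 : ℝ) = (t ^ 2 * √t)⁻¹ := by
      rw [mul_inv, hsqrt, ← rpow_natCast, ← rpow_neg ht.le, ← rpow_add ht]; norm_num
    calc |heatKernel s₁ z - heatKernel s₂ z|
        ≤ (z ^ 2 + t) * (|s₁ - s₂| / (2 * t ^ 2 * √t)) := by
          refine (abs_heatKernel_sub_le ht h₁ h₂ z).trans_eq ?_; ring
      _ ≤ (1 + T) * (1 + z ^ 2) * (|s₁ - s₂| / (2 * t ^ 2 * √t)) := by
          gcongr; nlinarith [mul_nonneg hT.le (sq_nonneg z)]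
      _ = (1 + T) / 2 * |s₁ - s₂| * t ^ (-5 / 2 : ℝ) * (1 + z ^ 2) := by rw [ht52]; ring
  have hsum : |heatKernel s₁ z - heatKernel s₂ z| ≤ heatKernel s₁ z + heatKernel s₂ z :=
    (abs_sub _ _).trans (by rw [abs_of_pos hp₁, abs_of_pos hp₂])
  have hsup : |heatKernel s₁ z - heatKernel s₂ z| ≤ 2 * t ^ (-1 / 2 : ℝ) := by
    have hk₁ := heatKernel_le_inv_sqrt (ht.trans_le h₁) z
    have hk₂ := heatKernel_le_inv_sqrt (ht.trans_le h₂) z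
    have : (√s₁)⁻¹ ≤ (√t)⁻¹ := by gcongr
    have : (√s₂)⁻¹ ≤ (√t)⁻¹ := by gcongr
    linarith
  have ht_pow : t ^ (-5 / 2 * α) * t ^ (-1 / 2 * (1 - α)) = t ^ (-2 * α - 1 / 2) := by
    rw [← rpow_add ht]; ring_nf
  calc (heatKernel s₁ z - heatKernel s₂ z) ^ 2
      ≤ ((1 + T) / 2 * |s₁ - s₂| * t ^ (-5 / 2 : ℝ) * (1 + z ^ 2)) ^ α *
          (2 * t ^ (-1 / 2 : ℝ)) ^ (1 - α) * (heatKernel s₁ z + heatKernel s₂ z) :=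
        sq_le_rpow_mul_rpow_mul hα₀ hα₁ hLip hsup hsum
    _ = ((1 + T) / 2) ^ α * 2 ^ (1 - α) * |s₁ - s₂| ^ α *
          (t ^ (-5 / 2 * α) * t ^ (-1 / 2 * (1 - α))) *
          ((1 + z ^ 2) ^ α * (heatKernel s₁ z + heatKernel s₂ z)) := by
        rw [mul_rpow (by positivity) (by positivity), mul_rpow (by positivity) (by positivity),
          mul_rpow (by positivity) (by positivity), mul_rpow (by positivity) (by positivity),
          ← rpow_mul ht.le, ← rpow_mul ht.le]
        ring
    _ ≤ _ := by
        rw [ht_pow]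
        gcongr
        exact rpow_le_self_of_one_le (le_add_of_nonneg_right (sq_nonneg z)) hα₁

lemma one_add_sq_mul_exp_abs_le {S : ℝ} (hS : 0 < S) (z : ℝ) :
    (1 + z ^ 2) * rexp |z| ≤ 2 * rexp (4 * S) * rexp (z ^ 2 / (4 * S)) := by
  have hquad : 1 + z ^ 2 ≤ 2 * rexp |z| := by
    nlinarith [quadratic_le_exp_of_nonneg (abs_nonneg z), sq_abs z, abs_nonneg z]
  have hamgm : 2 * |z| ≤ 4 * S + z ^ 2 / (4 * S) := by
    have : 0 ≤ (|z| - 4 * S) ^ 2 / (4 * S) := by positivity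
    rw [sub_sq, ← sq_abs z] at *
    field_simp at this ⊢
    nlinarith
  calc (1 + z ^ 2) * rexp |z| ≤ 2 * rexp |z| * rexp |z| := by gcongr
    _ = 2 * rexp (2 * |z|) := by rw [mul_assoc, ← exp_add, two_mul |z|]
    _ ≤ 2 * rexp (4 * S + z ^ 2 / (4 * S)) := by gcongr
    _ = 2 * rexp (4 * S) * rexp (z ^ 2 / (4 * S)) := by rw [exp_add, mul_assoc]

lemma heatKernel_mul_exp_sq_div {s : ℝ} (hs : 0 < s) (z : ℝ) :
    heatKernel s z * rexp (z ^ 2 / (4 * s)) = √2 * heatKernel (2 * s) z := by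
  have h2πs : 0 < √(2 * π * s) := by positivity
  rw [heatKernel, heatKernel, show 2 * π * (2 * s) = 2 * (2 * π * s) by ring,
    sqrt_mul zero_le_two, mul_assoc, ← exp_add, mul_inv, ← mul_assoc, ← mul_assoc,
    mul_inv_cancel₀ (by positivity), one_mul]
  congr 2
  field_simp
  ring

lemma heatKernel_mul_weight_le {s S : ℝ} (hs : 0 < s) (hsS : s ≤ S) (z : ℝ) :
    heatKernel s z * ((1 + z ^ 2) * rexp |z|) ≤ 2 * √2 * rexp (4 * S) * heatKernel (2 * s) z := by
  calc heatKernel s z * ((1 + z ^ 2) * rexp |z|)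
      ≤ heatKernel s z * (2 * rexp (4 * S) * rexp (z ^ 2 / (4 * s))) := by
        refine mul_le_mul_of_nonneg_left ?_ (heatKernel_pos hs z).le
        refine (one_add_sq_mul_exp_abs_le (hs.trans_le hsS) z).trans ?_
        gcongr
    _ = 2 * √2 * rexp (4 * S) * heatKernel (2 * s) z := by
        rw [mul_left_comm, heatKernel_mul_exp_sq_div hs]; ring

lemma continuous_heatKernel (s : ℝ) : Continuous (heatKernel s) := by
  unfold heatKernel; fun_prop

lemma integrable_heatKernel_mul_weight {s : ℝ} (hs : 0 < s) :
    Integrable fun z ↦ heatKernel s z * ((1 + z ^ 2) * rexp |z|) := by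
  refine ((integrable_heatKernel (by positivity : 0 ≤ 2 * s)).const_mul
    (2 * √2 * rexp (4 * s))).mono'
    ((continuous_heatKernel s).mul (by fun_prop)).aestronglyMeasurable (ae_of_all _ fun z ↦ ?_)
  rw [norm_of_nonneg (by have := heatKernel_pos hs z; positivity)]
  exact heatKernel_mul_weight_le hs le_rfl z

lemma integral_heatKernel_mul_weight_le {s S : ℝ} (hs : 0 < s) (hsS : s ≤ S) :
    ∫ z, heatKernel s z * ((1 + z ^ 2) * rexp |z|) ≤ 2 * √2 * rexp (4 * S) := by
  calc ∫ z, heatKernel s z * ((1 + z ^ 2) * rexp |z|)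
      ≤ ∫ z, 2 * √2 * rexp (4 * S) * heatKernel (2 * s) z :=
        integral_mono (integrable_heatKernel_mul_weight hs)
          ((integrable_heatKernel (by positivity)).const_mul _) (heatKernel_mul_weight_le hs hsS)
    _ = 2 * √2 * rexp (4 * S) := by
        rw [integral_const_mul, integral_heatKernel (by positivity), mul_one]

lemma integral_exp_neg_abs : ∫ x, rexp (-|x|) = 2 := by
  rw [integral_comp_abs (f := fun x ↦ rexp (-x)), integral_exp_neg_Ioi_zero, mul_one]

lemma integrable_exp_neg_abs : Integrable fun x ↦ rexp (-|x|) :=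
  Integrable.of_integral_ne_zero (by rw [integral_exp_neg_abs]; norm_num)

lemma integral_exp_neg_two_abs_mul_integral_le {f g : ℝ → ℝ} (hf : ∀ z, 0 ≤ f z)
    (hfg : ∀ z, f z * rexp |z| ≤ g z) (hg : Integrable g) :
    ∫ x, rexp (-2 * |x|) * ∫ y, f (x - y) * rexp |y| ≤ 2 * ∫ z, g z := by
  have hinner : ∀ x, ∫ y, f (x - y) * rexp |y| ≤ rexp |x| * ∫ z, g z := by
    intro x
    calc ∫ y, f (x - y) * rexp |y| ≤ ∫ y, rexp |x| * g (x - y) := by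
          refine integral_mono_of_nonneg (ae_of_all _ fun y ↦ ?_)
            ((hg.comp_sub_left x).const_mul _) (ae_of_all _ fun y ↦ ?_)
          · have := hf (x - y); positivity
          · have hy : |y| ≤ |x| + |x - y| := by simpa using abs_sub x (x - y)
            calc f (x - y) * rexp |y| ≤ f (x - y) * (rexp |x| * rexp |x - y|) := by
                  rw [← exp_add]; gcongr; exact hf _
              _ ≤ rexp |x| * g (x - y) := by
                  rw [mul_left_comm]; gcongr; exact hfg _
      _ = rexp |x| * ∫ z, g z := by rw [integral_const_mul, integral_sub_left_eq_self]
  calc ∫ x, rexp (-2 * |x|) * ∫ y, f (x - y) * rexp |y|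
      ≤ ∫ x, (∫ z, g z) * rexp (-|x|) := by
        refine integral_mono_of_nonneg (ae_of_all _ fun x ↦ ?_)
          (integrable_exp_neg_abs.const_mul _) (ae_of_all _ fun x ↦ ?_)
        · exact mul_nonneg (exp_pos _).le (integral_nonneg fun y ↦ mul_nonneg (hf _) (exp_pos _).le)
        · calc rexp (-2 * |x|) * ∫ y, f (x - y) * rexp |y|
              ≤ rexp (-2 * |x|) * (rexp |x| * ∫ z, g z) := by gcongr; exact hinner x
            _ = (∫ z, g z) * rexp (-|x|) := by
              rw [mul_left_comm, ← mul_assoc, ← exp_add]; ring_nf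
    _ = 2 * ∫ z, g z := by rw [integral_const_mul, integral_exp_neg_abs, mul_comm]

/-- Exponentially weighted `L²` estimate on time-increments of the heat kernel (key step
of Lemma 5.3): for every `T > 0` and `α ∈ (0, 1/4)` there is `C(T,α) > 0` such that for
all `t ∈ (0,T]` and `δ, δ′ ∈ (0,1]`,
`∫_ℝ e^{−2|x|} ∫_ℝ (p_{t+δ}(x−y) − p_{t+δ′}(x−y))² e^{|y|} dy dx
  ≤ C(T,α) |δ − δ′|^α t^{−2α−1/2}`. -/
theorem heatKernel_increment_weighted_L2_bound
    (T α : ℝ) (hT : 0 < T) (hα0 : 0 < α) (hα1 : α < 1 / 4) :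
    ∃ C : ℝ, 0 < C ∧ ∀ t δ δ' : ℝ,
      0 < t → t ≤ T → 0 < δ → δ ≤ 1 → 0 < δ' → δ' ≤ 1 →
      ∫ x : ℝ, Real.exp (-2 * |x|) *
          ∫ y : ℝ, (heatKernel (t + δ) (x - y) - heatKernel (t + δ') (x - y)) ^ 2 *
            Real.exp |y| ≤
        C * |δ - δ'| ^ α * t ^ (-2 * α - 1 / 2) := by
  set M := 2 * √2 * rexp (4 * (T + 1))
  refine ⟨4 * M * (((1 + T) / 2) ^ α * 2 ^ (1 - α)), by positivity, ?_⟩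
  intro t δ δ' ht htT hδ hδ1 hδ' hδ'1
  set c := ((1 + T) / 2) ^ α * 2 ^ (1 - α) * |δ - δ'| ^ α * t ^ (-2 * α - 1 / 2)
  set w : ℝ → ℝ → ℝ := fun s z ↦ heatKernel s z * ((1 + z ^ 2) * rexp |z|)
  have hw₁ : Integrable (w (t + δ)) := integrable_heatKernel_mul_weight (by linarith)
  have hw₂ : Integrable (w (t + δ')) := integrable_heatKernel_mul_weight (by linarith)
  have hI₁ : ∫ z, w (t + δ) z ≤ M := integral_heatKernel_mul_weight_le (by linarith) (by linarith)
  have hI₂ : ∫ z, w (t + δ') z ≤ M := integral_heatKernel_mul_weight_le (by linarith) (by linarith)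
  have hpoint : ∀ z, (heatKernel (t + δ) z - heatKernel (t + δ') z) ^ 2 * rexp |z|
      ≤ c * (w (t + δ) z + w (t + δ') z) := fun z ↦ by
    have := heatKernel_sub_sq_le hα0.le (by linarith) ht htT (s₁ := t + δ) (s₂ := t + δ')
      (by linarith) (by linarith) z
    rw [add_sub_add_left_eq_sub] at this
    calc _ ≤ c * ((1 + z ^ 2) * (heatKernel (t + δ) z + heatKernel (t + δ') z)) * rexp |z| := by
          gcongr
      _ = c * (w (t + δ) z + w (t + δ') z) := by ring
  calc _ ≤ 2 * ∫ z, c * (w (t + δ) z + w (t + δ') z) :=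
        integral_exp_neg_two_abs_mul_integral_le (fun z ↦ sq_nonneg _) hpoint
          ((hw₁.add hw₂).const_mul c)
    _ = 2 * c * ((∫ z, w (t + δ) z) + ∫ z, w (t + δ') z) := by
        rw [integral_const_mul, integral_add hw₁ hw₂]; ring
    _ ≤ 2 * c * (M + M) := by gcongr
    _ = _ := by ring
end
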